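/- The martingale M*_t := α(t)·H_t^(−(1−γ)/γ) − ∫₀ᵗ E_s H_s ds − β(t)·E_t·H_t, with α(t) = (x+P_T)·exp(−((1−γ)/γ)(r + θ²/(2γ))t), β(t) = (e^{κ(T−t)} − 1)/κ, κ = μ − r − ηθ, has Itô differential dM*_t = [(θ − η)β(t)E_t H_t + ((1−γ)/γ)θ·α(t)·H_t^(−(1−γ)/γ)] dW_t, i.e. the drift terms cancel. -/

import Mathlib

open Real

/-!
With `p = -(1-γ)/γ` and `f t h e = α t * h^p - β t * e * h`, the generator of `(H, E)` acts on
the two summands separately. On `α t * h^p` the spatial part is multiplication by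
`-r p + θ²/2 · p (p-1)`, which the exponential rate of `α` cancels because `1/γ + p - 1 = 0`.
On `-β t * e * h` the spatial part is `-(μ - r - ηθ) β e h = -κ β e h`, and `β` solves
`β' = -κ β - 1`, the `-1` absorbing the running endowment `-e h`.
-/

lemma hasDerivAt_const_mul_exp_mul (A c t : ℝ) :
    HasDerivAt (fun s => A * exp (c * s)) (c * (A * exp (c * t))) t :=
  (((hasDerivAt_id t).const_mul c).exp.const_mul A).congr_deriv (by simp only [id, mul_one]; ring)

lemma hasDerivAt_exp_mul_sub_sub_one_div {k : ℝ} (hk : k ≠ 0) (T t : ℝ) :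
    HasDerivAt (fun s => (exp (k * (T - s)) - 1) / k) (-exp (k * (T - t))) t :=
  ((((hasDerivAt_const t T).sub (hasDerivAt_id t)).const_mul k).exp.sub_const 1).div_const k
    |>.congr_deriv (by field_simp; simp)

section PowerMinusLinear

variable (a c p : ℝ) {y : ℝ}

lemma hasDerivAt_mul_rpow_sub_mul (hy : 0 < y) :
    HasDerivAt (fun z => a * z ^ p - c * z) (a * (p * y ^ (p - 1)) - c) y :=
  (((hasDerivAt_rpow_const (Or.inl hy.ne')).const_mul a).sub
    ((hasDerivAt_id y).const_mul c)).congr_deriv (by ring)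

lemma mul_deriv_mul_rpow_sub_mul (hy : 0 < y) :
    y * deriv (fun z => a * z ^ p - c * z) y = p * (a * y ^ p) - c * y := by
  rw [(hasDerivAt_mul_rpow_sub_mul a c p hy).deriv, rpow_sub_one hy.ne']
  field_simp

lemma sq_mul_deriv_deriv_mul_rpow_sub_mul (hy : 0 < y) :
    y ^ 2 * deriv (fun z => deriv (fun w => a * w ^ p - c * w) z) y
      = p * (p - 1) * (a * y ^ p) := by
  have hderiv : (fun z => deriv (fun w => a * w ^ p - c * w) z)
      =ᶠ[nhds y] fun z => a * p * z ^ (p - 1) - c := by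
    filter_upwards [Ioi_mem_nhds hy] with z hz
    rw [(hasDerivAt_mul_rpow_sub_mul a c p hz).deriv]
    ring
  rw [hderiv.deriv_eq,
    (((hasDerivAt_rpow_const (Or.inl hy.ne')).const_mul (a * p)).sub_const c).deriv,
    rpow_sub_one hy.ne', rpow_sub_one hy.ne']
  field_simp

end PowerMinusLinear

lemma deriv_deriv_mul_rpow_sub_mul_mul (a b p : ℝ) {h : ℝ} (hh : 0 < h) (e : ℝ) :
    deriv (fun e' => deriv (fun h' => a * h' ^ p - b * e' * h') h) e = -b := by
  have hderiv : (fun e' => deriv (fun h' => a * h' ^ p - b * e' * h') h)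
      = fun e' => a * (p * h ^ (p - 1)) - b * e' :=
    funext fun e' => (hasDerivAt_mul_rpow_sub_mul a (b * e') p hh).deriv
  rw [hderiv]
  simp

lemma crra_exponent_identity {γ : ℝ} (hγ : γ ≠ 0) (r θ : ℝ) :
    -((1 - γ) / γ) * (r + θ ^ 2 / (2 * γ)) - r * (-(1 - γ) / γ)
      + 1 / 2 * θ ^ 2 * ((-(1 - γ) / γ) * (-(1 - γ) / γ - 1)) = 0 := by
  field_simp
  ring

theorem ito_drift_cancellation_general (γ r θ μ η T x PT : ℝ)
    (hγ : 0 < γ)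
    (hκ : μ - r - η * θ ≠ 0)
    (α β : ℝ → ℝ)
    (hα : ∀ t, α t = (x + PT) * exp (-((1 - γ) / γ) * (r + θ ^ 2 / (2 * γ)) * t))
    (hβ : ∀ t, β t = (exp ((μ - r - η * θ) * (T - t)) - 1) / (μ - r - η * θ))
    (f : ℝ → ℝ → ℝ → ℝ)
    (hf : ∀ t h e, f t h e = α t * h ^ (-(1 - γ) / γ) - β t * e * h) :
    ∀ t ∈ Set.Icc (0 : ℝ) T, ∀ h e : ℝ, 0 < h → 0 < e →
      (deriv (fun t' => f t' h e) t - e * h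
          + (-r * h) * deriv (fun h' => f t h' e) h
          + μ * e * deriv (fun e' => f t h e') e
          + 1 / 2 * θ ^ 2 * h ^ 2 * deriv (fun h' => deriv (fun h'' => f t h'' e) h') h
          + 1 / 2 * η ^ 2 * e ^ 2 * deriv (fun e' => deriv (fun e'' => f t h e'') e') e
          + (-θ * h) * (η * e) * deriv (fun e' => deriv (fun h' => f t h' e') h) e
        = 0) ∧
      ((-θ * h) * deriv (fun h' => f t h' e) h + η * e * deriv (fun e' => f t h e') e
        = (θ - η) * β t * e * h + (1 - γ) / γ * θ * α t * h ^ (-(1 - γ) / γ)) := by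
  intro t _ h e hh _
  simp only [hf]
  set p := -(1 - γ) / γ
  set κ := μ - r - η * θ
  have hα' : HasDerivAt α (-((1 - γ) / γ) * (r + θ ^ 2 / (2 * γ)) * α t) t := by
    rw [funext hα]; exact hasDerivAt_const_mul_exp_mul _ _ t
  have hβ' : HasDerivAt β (-exp (κ * (T - t))) t := by
    rw [funext hβ]; exact hasDerivAt_exp_mul_sub_sub_one_div hκ T t
  have hβ_ode : exp (κ * (T - t)) = κ * β t + 1 := by
    rw [hβ t, mul_div_cancel₀ _ hκ, sub_add_cancel]
  have hDt : deriv (fun t' => α t' * h ^ p - β t' * e * h) t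
      = -((1 - γ) / γ) * (r + θ ^ 2 / (2 * γ)) * α t * h ^ p + exp (κ * (T - t)) * e * h :=
    ((hα'.mul_const (h ^ p)).sub ((hβ'.mul_const e).mul_const h)).deriv.trans (by ring)
  have hDh := mul_deriv_mul_rpow_sub_mul (α t) (β t * e) p hh
  have hDhh := sq_mul_deriv_deriv_mul_rpow_sub_mul (α t) (β t * e) p hh
  have hDe : deriv (fun e' => α t * h ^ p - β t * e' * h) = fun _ => -(β t * h) := by
    funext e'; simp
  have hDeh := deriv_deriv_mul_rpow_sub_mul_mul (α t) (β t) p hh e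
  rw [hDt, hDe, hDeh, deriv_const]
  constructor
  · linear_combination (-r) * hDh + 1 / 2 * θ ^ 2 * hDhh + e * h * hβ_ode
      + α t * h ^ p * crra_exponent_identity hγ.ne' r θ
  · linear_combination (-θ) * hDh

/-- Itô computation for `M*_t = α(t) H_t^(-(1-γ)/γ) - ∫₀ᵗ E_s H_s ds - β(t) E_t H_t`:
writing `f t h e = α t * h^(-(1-γ)/γ) - β t * e * h` (the accumulated-endowment term
contributes `-e h` to the drift), the Itô drift obtained from
`dH = -r H dt - θ H dW`, `dE = μ E dt + η E dW` vanishes, and the diffusion coefficient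
equals `(θ - η) β(t) E H + ((1-γ)/γ) θ α(t) H^(-(1-γ)/γ)`. -/
theorem ito_drift_cancellation (γ r θ μ η T x PT : ℝ)
    (hγ : 0 < γ) (hγ1 : γ ≠ 1) (hη : 0 < η) (hT : 0 < T)
    (hκ : μ - r - η * θ ≠ 0)
    (α β : ℝ → ℝ)
    (hα : ∀ t, α t = (x + PT) * exp (-((1 - γ) / γ) * (r + θ ^ 2 / (2 * γ)) * t))
    (hβ : ∀ t, β t = (exp ((μ - r - η * θ) * (T - t)) - 1) / (μ - r - η * θ))
    (f : ℝ → ℝ → ℝ → ℝ)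
    (hf : ∀ t h e, f t h e = α t * h ^ (-(1 - γ) / γ) - β t * e * h) :
    ∀ t ∈ Set.Icc (0 : ℝ) T, ∀ h e : ℝ, 0 < h → 0 < e →
      (deriv (fun t' => f t' h e) t - e * h
          + (-r * h) * deriv (fun h' => f t h' e) h
          + μ * e * deriv (fun e' => f t h e') e
          + 1 / 2 * θ ^ 2 * h ^ 2 * deriv (fun h' => deriv (fun h'' => f t h'' e) h') h
          + 1 / 2 * η ^ 2 * e ^ 2 * deriv (fun e' => deriv (fun e'' => f t h e'') e') e
          + (-θ * h) * (η * e) * deriv (fun e' => deriv (fun h' => f t h' e') h) e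
        = 0) ∧
      ((-θ * h) * deriv (fun h' => f t h' e) h + η * e * deriv (fun e' => f t h e') e
        = (θ - η) * β t * e * h + (1 - γ) / γ * θ * α t * h ^ (-(1 - γ) / γ)) :=
  ito_drift_cancellation_general γ r θ μ η T x PT hγ hκ α β hα hβ f hf
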